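/- arXiv:quant-ph/0703056 — 8 statements merged into one kernel-verified Lean document; each statement's English description precedes it below -/
import Mathlib

section
/- Let α be a closed subspace of a complex Hilbert space, x a ray not orthogonal to α, and y a ray contained in α. Then p(x,y) = p(x, α(x)) · p(α(x), y), where α(x) denotes the ray spanned by the projection of x onto α. -/
local notation "⟪" x ", " y "⟫" => @inner ℂ _ _ x y

/-- The similarity `p` between the rays spanned by two nonzero vectors:
for unit vectors it is the squared modulus of the inner product. -/
noncomputable def pRay {H : Type*} [NormedAddCommGroup H] [InnerProductSpace ℂ H]
    (s t : H) : ℝ :=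
  ‖⟪s, t⟫‖ ^ 2 / (‖s‖ ^ 2 * ‖t‖ ^ 2)

/-!
Write `w` for the projection of `u` onto `α`. Since `u - w ⟂ α`, the vector `u` has the same inner
products as `w` with every vector of `α`: in particular `⟪u, v⟫ = ⟪w, v⟫` and `⟪u, w⟫ = ‖w‖²`.
Then `p(u, w) = ‖w‖² / ‖u‖²` and `p(w, v) = ‖⟪u, v⟫‖² / (‖w‖² ‖v‖²)`, whose product is `p(u, v)`.
-/

open Submodule

section

variable {H : Type*} [NormedAddCommGroup H] [InnerProductSpace ℂ H]

lemma pRay_eq_mul_of_inner_eq {u v w : H} (hw : w ≠ 0) (huw : ⟪u, w⟫ = (‖w‖ : ℂ) ^ 2)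
    (hwv : ⟪w, v⟫ = ⟪u, v⟫) : pRay u v = pRay u w * pRay w v := by
  have hw' : ‖w‖ ≠ 0 := norm_ne_zero_iff.mpr hw
  unfold pRay
  rw [huw, hwv, norm_pow, Complex.norm_real, norm_norm]
  field_simp

lemma inner_self_starProjection (K : Submodule ℂ H) [K.HasOrthogonalProjection] (u : H) :
    ⟪u, K.starProjection u⟫ = (‖K.starProjection u‖ : ℂ) ^ 2 :=
  calc ⟪u, K.starProjection u⟫ = ⟪u, K.starProjection (K.starProjection u)⟫ := by
        rw [starProjection_eq_self_iff.mpr (K.starProjection_apply_mem u)]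
    _ = ⟪K.starProjection u, K.starProjection u⟫ := (inner_starProjection_left_eq_right K _ _).symm
    _ = (‖K.starProjection u‖ : ℂ) ^ 2 := inner_self_eq_norm_sq_to_K _

theorem pRay_eq_mul_pRay_starProjection {K : Submodule ℂ H} [K.HasOrthogonalProjection]
    {u v : H} (hv : v ∈ K) (hu : K.starProjection u ≠ 0) :
    pRay u v = pRay u (K.starProjection u) * pRay (K.starProjection u) v :=
  pRay_eq_mul_of_inner_eq hu (inner_self_starProjection K u)
    (inner_orthogonalProjectionOnto_eq_of_mem_right ⟨v, hv⟩ u)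

end

theorem p_projection_factorization_general {H : Type*} [NormedAddCommGroup H]
    [InnerProductSpace ℂ H]
    (α : Submodule ℂ H) [CompleteSpace α]
    (x y : Submodule ℂ H) (u v : H)
    (hx : x = Submodule.span ℂ {u}) (hy : y = Submodule.span ℂ {v})
    (hyα : y ≤ α)
    (hno : ¬ ∀ a ∈ x, ∀ b ∈ α, ⟪a, b⟫ = 0) :
    pRay u v =
      pRay u (α.orthogonalProjectionOnto u : H) * pRay (α.orthogonalProjectionOnto u : H) v := by
  have hvα : v ∈ α := hyα (hy ▸ mem_span_singleton_self v)
  have hPu : α.starProjection u ≠ 0 := by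
    rwa [Ne, starProjection_apply_eq_zero_iff, ← span_singleton_le_iff_mem, ← hx, ← isOrtho_iff_le,
      isOrtho_iff_inner_eq]
  exact pRay_eq_mul_pRay_starProjection hvα hPu

theorem p_projection_factorization {H : Type*} [NormedAddCommGroup H]
    [InnerProductSpace ℂ H] [CompleteSpace H]
    (α : Submodule ℂ H) (hαc : IsClosed (α : Set H)) [CompleteSpace α]
    (x y : Submodule ℂ H) (u v : H) (hu : u ≠ 0) (hv : v ≠ 0)
    (hx : x = Submodule.span ℂ {u}) (hy : y = Submodule.span ℂ {v})
    (hyα : y ≤ α)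
    (hno : ¬ ∀ a ∈ x, ∀ b ∈ α, ⟪a, b⟫ = 0) :
    pRay u v =
      pRay u (α.orthogonalProjectionOnto u : H) * pRay (α.orthogonalProjectionOnto u : H) v :=
  p_projection_factorization_general α x y u v hx hy hyα hno
end

section
/- If closed subspaces α, β of a complex Hilbert space commute and a ray x is not orthogonal to α, then p(x, α ∧ β) = p(x,α) · p(α(x), β). -/
/-! Commuting projections satisfy `P_{α ⊓ β} = P_β ∘ P_α`, so the identity is the telescoping
`a / c = (b / c) * (a / b)` with `b = ‖P_α u‖²`; if `P_α u = 0` then `a = 0` as well, and both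
sides vanish under Lean's `0 / 0 = 0`. -/

local notation "⟪" x ", " y "⟫" => @inner ℂ _ _ x y

namespace Submodule

variable {𝕜 E : Type*} [RCLike 𝕜] [NormedAddCommGroup E] [InnerProductSpace 𝕜 E]
  {U V : Submodule 𝕜 E} [U.HasOrthogonalProjection] [V.HasOrthogonalProjection]

theorem starProjection_inf_apply_of_commute [(U ⊓ V).HasOrthogonalProjection]
    (hcomm : ∀ w, U.starProjection (V.starProjection w) = V.starProjection (U.starProjection w))
    (u : E) : (U ⊓ V).starProjection u = V.starProjection (U.starProjection u) := by
  refine eq_starProjection_of_mem_of_inner_eq_zero ⟨?_, V.starProjection_apply_mem _⟩ ?_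
  · rw [← hcomm]
    exact U.starProjection_apply_mem _
  · rintro w ⟨hwU, hwV⟩
    have hself : inner 𝕜 (V.starProjection (U.starProjection u)) w = inner 𝕜 u w := by
      rw [inner_starProjection_left_eq_right, starProjection_eq_self_iff.2 hwV,
        inner_starProjection_left_eq_right, starProjection_eq_self_iff.2 hwU]
    rw [inner_sub_left, hself, sub_self]

end Submodule

theorem div_eq_div_mul_div_of_imp_eq_zero {K : Type*} [Field K] {a b c : K}
    (h : b = 0 → a = 0) : a / c = b / c * (a / b) := by
  rcases eq_or_ne b 0 with hb | hb
  · simp [hb, h hb]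
  · rw [div_mul_div_comm, mul_comm c, mul_div_mul_left _ _ hb]

theorem p_conjunction_conditional_general {H : Type*} [NormedAddCommGroup H]
    [InnerProductSpace ℂ H]
    (α β : Submodule ℂ H)
    [CompleteSpace α] [CompleteSpace β]
    [CompleteSpace (α ⊓ β : Submodule ℂ H)]
    (hcomm : ∀ w : H,
      (Submodule.orthogonalProjectionOnto α ((Submodule.orthogonalProjectionOnto β w : H)) : H) =
      (Submodule.orthogonalProjectionOnto β ((Submodule.orthogonalProjectionOnto α w : H)) : H))
    (u : H) :
    ‖(Submodule.orthogonalProjectionOnto (α ⊓ β : Submodule ℂ H) u : H)‖ ^ 2 / ‖u‖ ^ 2 =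
      (‖(Submodule.orthogonalProjectionOnto α u : H)‖ ^ 2 / ‖u‖ ^ 2) *
      (‖(Submodule.orthogonalProjectionOnto β ((Submodule.orthogonalProjectionOnto α u : H)) : H)‖ ^ 2 /
        ‖(Submodule.orthogonalProjectionOnto α u : H)‖ ^ 2) := by
  have hinf := Submodule.starProjection_inf_apply_of_commute hcomm u
  simp only [Submodule.starProjection_apply] at hinf
  rw [hinf]
  refine div_eq_div_mul_div_of_imp_eq_zero fun h => ?_
  have hαu : (Submodule.orthogonalProjectionOnto α u : H) = 0 := by simpa using h
  simp [hαu]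

theorem p_conjunction_conditional {H : Type*} [NormedAddCommGroup H]
    [InnerProductSpace ℂ H] [CompleteSpace H]
    (α β : Submodule ℂ H)
    (hαc : IsClosed (α : Set H)) (hβc : IsClosed (β : Set H))
    [CompleteSpace α] [CompleteSpace β]
    [CompleteSpace (α ⊓ β : Submodule ℂ H)]
    (hcomm : ∀ w : H,
      (Submodule.orthogonalProjectionOnto α ((Submodule.orthogonalProjectionOnto β w : H)) : H) =
      (Submodule.orthogonalProjectionOnto β ((Submodule.orthogonalProjectionOnto α w : H)) : H))
    (x : Submodule ℂ H) (u : H) (hu : u ≠ 0) (hx : x = Submodule.span ℂ {u})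
    (hno : ¬ ∀ a ∈ x, ∀ b ∈ α, ⟪a, b⟫ = 0) :
    ‖(Submodule.orthogonalProjectionOnto (α ⊓ β : Submodule ℂ H) u : H)‖ ^ 2 / ‖u‖ ^ 2 =
      (‖(Submodule.orthogonalProjectionOnto α u : H)‖ ^ 2 / ‖u‖ ^ 2) *
      (‖(Submodule.orthogonalProjectionOnto β ((Submodule.orthogonalProjectionOnto α u : H)) : H)‖ ^ 2 /
        ‖(Submodule.orthogonalProjectionOnto α u : H)‖ ^ 2) :=
  p_conjunction_conditional_general α β hcomm u
end

section
/- Let α, β be commuting closed subspaces of a complex Hilbert space and x a ray not orthogonal to α or to α^⊥. Then p(x,β) = p(x,α)·p(α(x),β) + p(x,α^⊥)·p(α^⊥(x),β). -/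
local notation "⟪" x ", " y "⟫" => @inner ℂ _ _ x y

/-!
If the projections onto `K` and `L` commute, then `L` maps `K` into `K` and `Kᗮ` into `Kᗮ`,
so splitting `v = P_K v + P_{Kᗮ} v` and applying `P_L` gives two orthogonal pieces; Pythagoras
yields `‖P_L v‖² = ‖P_L P_K v‖² + ‖P_L P_{Kᗮ} v‖²`, which is the total probability formula after
dividing by `‖v‖²`.
-/

namespace Submodule

variable {𝕜 E : Type*} [RCLike 𝕜] [NormedAddCommGroup E] [InnerProductSpace 𝕜 E]
  {K L : Submodule 𝕜 E} [K.HasOrthogonalProjection] [L.HasOrthogonalProjection]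

theorem commute_starProjection_orthogonal_left
    (h : Commute K.starProjection L.starProjection) :
    Commute Kᗮ.starProjection L.starProjection := by
  rw [starProjection_orthogonal']
  exact (Commute.one_left _).sub_left h

theorem starProjection_mem_of_commute (h : Commute K.starProjection L.starProjection)
    {v : E} (hv : v ∈ K) : L.starProjection v ∈ K := by
  rw [← starProjection_eq_self_iff]
  calc K.starProjection (L.starProjection v) = L.starProjection (K.starProjection v) :=
        DFunLike.congr_fun h.eq v
    _ = L.starProjection v := by rw [starProjection_eq_self_iff.mpr hv]

theorem norm_sq_starProjection_eq_of_commute (h : Commute K.starProjection L.starProjection)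
    (v : E) :
    ‖L.starProjection v‖ ^ 2 =
      ‖L.starProjection (K.starProjection v)‖ ^ 2 + ‖L.starProjection (Kᗮ.starProjection v)‖ ^ 2 := by
  have horth : inner 𝕜 (L.starProjection (K.starProjection v))
      (L.starProjection (Kᗮ.starProjection v)) = 0 :=
    inner_right_of_mem_orthogonal (starProjection_mem_of_commute h (K.starProjection_apply_mem v))
      (starProjection_mem_of_commute (commute_starProjection_orthogonal_left h)
        (Kᗮ.starProjection_apply_mem v))
  conv_lhs => rw [← K.starProjection_add_starProjection_orthogonal v, map_add]
  simpa only [sq] using norm_add_sq_eq_norm_sq_add_norm_sq_of_inner_eq_zero _ _ horth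

end Submodule

theorem div_mul_div_cancel_of_imp {G₀ : Type*} [CommGroupWithZero G₀] {a b c : G₀}
    (h : b = 0 → a = 0) : b / c * (a / b) = a / c := by
  rw [div_mul_eq_mul_div, mul_div_cancel_of_imp' h]

theorem p_total_probability_commuting_general {H : Type*} [NormedAddCommGroup H]
    [InnerProductSpace ℂ H]
    (α β : Submodule ℂ H)
    [CompleteSpace α] [CompleteSpace β]
    (hcomm : ∀ w : H,
      (Submodule.orthogonalProjectionOnto α ((Submodule.orthogonalProjectionOnto β w : H)) : H) =
      (Submodule.orthogonalProjectionOnto β ((Submodule.orthogonalProjectionOnto α w : H)) : H))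
    (u : H) :
    ‖(Submodule.orthogonalProjectionOnto β u : H)‖ ^ 2 / ‖u‖ ^ 2 =
      (‖(Submodule.orthogonalProjectionOnto α u : H)‖ ^ 2 / ‖u‖ ^ 2) *
        (‖(Submodule.orthogonalProjectionOnto β ((Submodule.orthogonalProjectionOnto α u : H)) : H)‖ ^ 2 /
          ‖(Submodule.orthogonalProjectionOnto α u : H)‖ ^ 2) +
      (‖(Submodule.orthogonalProjectionOnto αᗮ u : H)‖ ^ 2 / ‖u‖ ^ 2) *
        (‖(Submodule.orthogonalProjectionOnto β ((Submodule.orthogonalProjectionOnto αᗮ u : H)) : H)‖ ^ 2 /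
          ‖(Submodule.orthogonalProjectionOnto αᗮ u : H)‖ ^ 2) := by
  simp only [← Submodule.starProjection_apply]
  have hcomm' : Commute α.starProjection β.starProjection := ContinuousLinearMap.ext hcomm
  have hzero {K : Submodule ℂ H} [K.HasOrthogonalProjection] :
      ‖K.starProjection u‖ ^ 2 = 0 → ‖β.starProjection (K.starProjection u)‖ ^ 2 = 0 := by
    simp +contextual
  rw [div_mul_div_cancel_of_imp hzero, div_mul_div_cancel_of_imp hzero, ← add_div,
    ← Submodule.norm_sq_starProjection_eq_of_commute hcomm']

theorem p_total_probability_commuting {H : Type*} [NormedAddCommGroup H]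
    [InnerProductSpace ℂ H] [CompleteSpace H]
    (α β : Submodule ℂ H)
    (hαc : IsClosed (α : Set H)) (hβc : IsClosed (β : Set H))
    [CompleteSpace α] [CompleteSpace β]
    (hcomm : ∀ w : H,
      (Submodule.orthogonalProjectionOnto α ((Submodule.orthogonalProjectionOnto β w : H)) : H) =
      (Submodule.orthogonalProjectionOnto β ((Submodule.orthogonalProjectionOnto α w : H)) : H))
    (x : Submodule ℂ H) (u : H) (hu : u ≠ 0) (hx : x = Submodule.span ℂ {u})
    (hno : ¬ ∀ a ∈ x, ∀ b ∈ α, ⟪a, b⟫ = 0)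
    (hno' : ¬ ∀ a ∈ x, ∀ b ∈ αᗮ, ⟪a, b⟫ = 0) :
    ‖(Submodule.orthogonalProjectionOnto β u : H)‖ ^ 2 / ‖u‖ ^ 2 =
      (‖(Submodule.orthogonalProjectionOnto α u : H)‖ ^ 2 / ‖u‖ ^ 2) *
        (‖(Submodule.orthogonalProjectionOnto β ((Submodule.orthogonalProjectionOnto α u : H)) : H)‖ ^ 2 /
          ‖(Submodule.orthogonalProjectionOnto α u : H)‖ ^ 2) +
      (‖(Submodule.orthogonalProjectionOnto αᗮ u : H)‖ ^ 2 / ‖u‖ ^ 2) *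
        (‖(Submodule.orthogonalProjectionOnto β ((Submodule.orthogonalProjectionOnto αᗮ u : H)) : H)‖ ^ 2 /
          ‖(Submodule.orthogonalProjectionOnto αᗮ u : H)‖ ^ 2) :=
  p_total_probability_commuting_general α β hcomm u
end

section
/- Let α, β be closed subspaces of a complex Hilbert space and x a ray with x ⊆ α. Let t ∈ x be nonzero, and put u := P_β t, v := P_α u, w := P_β v. Then ‖u − v‖² = ⟨t, v − w⟩; consequently p(x,β)·(1 − p(β(x),α))² ≤ p(β(x),α)·(1 − p(α(β(x)),β)), provided the relevant projections are nonzero. -/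
local notation "⟪" x ", " y "⟫" => @inner ℂ _ _ x y

theorem quantitative_interference {H : Type*} [NormedAddCommGroup H]
    [InnerProductSpace ℂ H] [CompleteSpace H]
    (α β : Submodule ℂ H)
    (hαc : IsClosed (α : Set H)) (hβc : IsClosed (β : Set H))
    [CompleteSpace α] [CompleteSpace β]
    (x : Submodule ℂ H) (t : H) (ht : t ≠ 0) (hx : x = Submodule.span ℂ {t})
    (hxα : x ≤ α)
    (u v w : H)
    (hu : u = (β.orthogonalProjectionOnto t : H))
    (hv : v = (α.orthogonalProjectionOnto u : H))
    (hw : w = (β.orthogonalProjectionOnto v : H))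
    (hune : u ≠ 0) (hvne : v ≠ 0) :
    ⟪t, v - w⟫ = ((‖u - v‖ ^ 2 : ℝ) : ℂ) ∧
    (‖u‖ ^ 2 / ‖t‖ ^ 2) * (1 - ‖v‖ ^ 2 / ‖u‖ ^ 2) ^ 2 ≤
      (‖v‖ ^ 2 / ‖u‖ ^ 2) * (1 - ‖w‖ ^ 2 / ‖v‖ ^ 2) := by
  have htα : t ∈ α := hxα (hx ▸ Submodule.mem_span_singleton_self t)
  have hPt : (α.orthogonalProjectionOnto t : H) = t := Submodule.starProjection_eq_self_iff.mpr htα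
  have key : ∀ (K : Submodule ℂ H) (_ : CompleteSpace K) (s : H),
      ⟪s, (K.orthogonalProjectionOnto s : H)⟫
        = ((‖(K.orthogonalProjectionOnto s : H)‖ ^ 2 : ℝ) : ℂ) := by
    intro K _ s
    have h1 : ⟪(K.orthogonalProjectionOnto s : H), s⟫
        = ⟪(K.orthogonalProjectionOnto s : H), (K.orthogonalProjectionOnto s : H)⟫ := by
      have := Submodule.inner_orthogonalProjectionOnto_eq_of_mem_left (K := K)
        (K.orthogonalProjectionOnto s) s
      rw [Submodule.coe_inner] at this
      exact this.symm
    calc ⟪s, (K.orthogonalProjectionOnto s : H)⟫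
        = (starRingEnd ℂ) ⟪(K.orthogonalProjectionOnto s : H), s⟫ := (inner_conj_symm _ _).symm
      _ = (starRingEnd ℂ) ⟪(K.orthogonalProjectionOnto s : H), (K.orthogonalProjectionOnto s : H)⟫ := by
          rw [h1]
      _ = ((‖(K.orthogonalProjectionOnto s : H)‖ ^ 2 : ℝ) : ℂ) := by
          rw [inner_self_eq_norm_sq_to_K]; simp
  have h_uv : ⟪u, v⟫ = ((‖v‖ ^ 2 : ℝ) : ℂ) := by rw [hv]; exact key α ‹_› u
  have h_vw : ⟪v, w⟫ = ((‖w‖ ^ 2 : ℝ) : ℂ) := by rw [hw]; exact key β ‹_› v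
  have h_tu : ⟪t, u⟫ = ((‖u‖ ^ 2 : ℝ) : ℂ) := by rw [hu]; exact key β ‹_› t
  have h_tv : ⟪t, v⟫ = ((‖u‖ ^ 2 : ℝ) : ℂ) := by
    rw [hv, ← h_tu]
    calc ⟪t, (α.orthogonalProjectionOnto u : H)⟫
        = ⟪(α.orthogonalProjectionOnto t : H), u⟫ := by
          exact (Submodule.inner_starProjection_left_eq_right _ _ _).symm
      _ = ⟪t, u⟫ := by rw [hPt]
  have h_tw : ⟪t, w⟫ = ((‖v‖ ^ 2 : ℝ) : ℂ) := by
    rw [hw, ← h_uv]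
    calc ⟪t, (β.orthogonalProjectionOnto v : H)⟫
        = ⟪(β.orthogonalProjectionOnto t : H), v⟫ := by
          exact (Submodule.inner_starProjection_left_eq_right _ _ _).symm
      _ = ⟪u, v⟫ := by rw [hu]
  have huvnorm : ‖u - v‖ ^ 2 = ‖u‖ ^ 2 - ‖v‖ ^ 2 := by
    have := norm_sub_sq (𝕜 := ℂ) u v
    have hre : RCLike.re ⟪u, v⟫ = ‖v‖ ^ 2 := by rw [h_uv]; exact RCLike.ofReal_re _
    rw [hre] at this; linarith
  have hvwnorm : ‖v - w‖ ^ 2 = ‖v‖ ^ 2 - ‖w‖ ^ 2 := by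
    have := norm_sub_sq (𝕜 := ℂ) v w
    have hre : RCLike.re ⟪v, w⟫ = ‖w‖ ^ 2 := by rw [h_vw]; exact RCLike.ofReal_re _
    rw [hre] at this; linarith
  have part1 : ⟪t, v - w⟫ = ((‖u - v‖ ^ 2 : ℝ) : ℂ) := by
    rw [inner_sub_right, h_tv, h_tw, huvnorm]; push_cast; ring
  refine ⟨part1, ?_⟩
  -- Cauchy-Schwarz
  have hcs : ‖u - v‖ ^ 2 ≤ ‖t‖ * ‖v - w‖ := by
    have h1 : ‖⟪t, v - w⟫‖ ≤ ‖t‖ * ‖v - w‖ := norm_inner_le_norm t (v - w)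
    rw [part1] at h1
    simpa [abs_of_nonneg (sq_nonneg (‖u - v‖))] using h1
  have key2 : (‖u‖ ^ 2 - ‖v‖ ^ 2) ^ 2 ≤ ‖t‖ ^ 2 * (‖v‖ ^ 2 - ‖w‖ ^ 2) := by
    have h2 : (‖u - v‖ ^ 2) ^ 2 ≤ (‖t‖ * ‖v - w‖) ^ 2 := by
      apply sq_le_sq' <;> nlinarith [sq_nonneg (‖u - v‖), norm_nonneg (u - v)]
    calc (‖u‖ ^ 2 - ‖v‖ ^ 2) ^ 2 = (‖u - v‖ ^ 2) ^ 2 := by rw [huvnorm]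
      _ ≤ (‖t‖ * ‖v - w‖) ^ 2 := h2
      _ = ‖t‖ ^ 2 * ‖v - w‖ ^ 2 := by ring
      _ = ‖t‖ ^ 2 * (‖v‖ ^ 2 - ‖w‖ ^ 2) := by rw [hvwnorm]
  have ha : (0:ℝ) < ‖t‖ ^ 2 := pow_pos (norm_pos_iff.mpr ht) 2
  have hb : (0:ℝ) < ‖u‖ ^ 2 := pow_pos (norm_pos_iff.mpr hune) 2
  have hc : (0:ℝ) < ‖v‖ ^ 2 := pow_pos (norm_pos_iff.mpr hvne) 2
  have e1 : (‖u‖ ^ 2 / ‖t‖ ^ 2) * (1 - ‖v‖ ^ 2 / ‖u‖ ^ 2) ^ 2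
      = (‖u‖ ^ 2 - ‖v‖ ^ 2) ^ 2 / (‖t‖ ^ 2 * ‖u‖ ^ 2) := by
    field_simp
  have e2 : (‖v‖ ^ 2 / ‖u‖ ^ 2) * (1 - ‖w‖ ^ 2 / ‖v‖ ^ 2)
      = (‖v‖ ^ 2 - ‖w‖ ^ 2) / ‖u‖ ^ 2 := by
    field_simp
  rw [e1, e2, div_le_div_iff₀ (mul_pos ha hb) hb]
  nlinarith [mul_le_mul_of_nonneg_right key2 hb.le]
end

section
/- Let y, z be non-orthogonal rays in a complex Hilbert space and r ∈ [0,1]. Define the superposition ry + (1−r)z as the ray spanned by √r·v + √(1−r)·w, where v ∈ y, w ∈ z are unit vectors with ⟨v,w⟩ > 0. Then √r·v + √(1−r)·w ≠ 0, the superposition is well-defined (independent of the choice of v), 1·y + 0·z = y, and ry + (1−r)z = (1−r)z + ry. -/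
/-!
Unit vectors spanning the same complex line differ by a phase. If both `⟪v, w⟫` and
`⟪v', w'⟫` are positive, the phase taking `w` to `w'` must equal the one taking `v` to `v'`,
so `√r v + √(1-r) w` only changes by that common phase. It is nonzero because its inner
product with `v + w` has positive real part.
-/

local notation "⟪" x ", " y "⟫" => @inner ℂ _ _ x y

open scoped ComplexOrder

theorem Real.sqrt_add_sqrt_one_sub_pos (r : ℝ) : 0 < √r + √(1 - r) := by
  rcases le_or_gt r 0 with hr | hr
  · exact add_pos_of_nonneg_of_pos (Real.sqrt_nonneg r) (Real.sqrt_pos.mpr (by linarith))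
  · exact add_pos_of_pos_of_nonneg (Real.sqrt_pos.mpr hr) (Real.sqrt_nonneg _)

theorem Complex.eq_one_of_norm_eq_one_of_mul_pos {u x : ℂ} (hu : ‖u‖ = 1) (hx : 0 < x)
    (hux : 0 < u * x) : u = 1 := by
  have hfix : u * x = 1 * x := by
    rw [← Complex.norm_of_nonneg' hux.le, norm_mul, hu, one_mul, Complex.norm_of_nonneg' hx.le,
      one_mul]
  exact mul_right_cancel₀ hx.ne' hfix

section InnerProductSpace

variable {H : Type*} [NormedAddCommGroup H] [InnerProductSpace ℂ H]

theorem smul_add_smul_ne_zero_of_re_inner_pos {v w : H} (h : 0 < (⟪v, w⟫).re) {a b : ℝ}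
    (ha : 0 ≤ a) (hb : 0 ≤ b) (hab : 0 < a + b) : (a : ℂ) • v + (b : ℂ) • w ≠ 0 := by
  intro h0
  have hvv : (⟪v, v⟫).re = ‖v‖ ^ 2 := inner_self_eq_norm_sq (𝕜 := ℂ) v
  have hww : (⟪w, w⟫).re = ‖w‖ ^ 2 := inner_self_eq_norm_sq (𝕜 := ℂ) w
  have hwv : (⟪w, v⟫).re = (⟪v, w⟫).re := inner_re_symm (𝕜 := ℂ) w v
  have hexpand : (⟪v + w, (a : ℂ) • v + (b : ℂ) • w⟫).re
      = a * ‖v‖ ^ 2 + b * ‖w‖ ^ 2 + (a + b) * (⟪v, w⟫).re := by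
    simp only [inner_add_left, inner_add_right, inner_smul_right, Complex.add_re,
      Complex.re_ofReal_mul, hvv, hww, hwv]
    ring
  rw [h0, inner_zero_right, Complex.zero_re] at hexpand
  linarith [mul_nonneg ha (sq_nonneg ‖v‖), mul_nonneg hb (sq_nonneg ‖w‖), mul_pos hab h]

theorem exists_units_smul_eq_of_inner_pos {v w v' w' : H} (hv : ‖v'‖ = ‖v‖) (hw : ‖w'‖ = ‖w‖)
    (hvv' : ℂ ∙ v = ℂ ∙ v') (hww' : ℂ ∙ w = ℂ ∙ w') (h : 0 < ⟪v, w⟫) (h' : 0 < ⟪v', w'⟫) :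
    ∃ c : ℂˣ, c • v = v' ∧ c • w = w' := by
  obtain ⟨c, rfl⟩ := Submodule.span_singleton_eq_span_singleton.mp hvv'
  obtain ⟨d, rfl⟩ := Submodule.span_singleton_eq_span_singleton.mp hww'
  have hv0 : v ≠ 0 := by rintro rfl; simp at h
  have hw0 : w ≠ 0 := by rintro rfl; simp at h
  have hc : ‖(c : ℂ)‖ = 1 := by
    rwa [Units.smul_def, norm_smul, mul_eq_right₀ (norm_ne_zero_iff.mpr hv0)] at hv
  have hd : ‖(d : ℂ)‖ = 1 := by
    rwa [Units.smul_def, norm_smul, mul_eq_right₀ (norm_ne_zero_iff.mpr hw0)] at hw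
  have hphase : starRingEnd ℂ c * d = 1 := by
    refine Complex.eq_one_of_norm_eq_one_of_mul_pos (by simp [hc, hd]) h ?_
    rwa [Units.smul_def, Units.smul_def, inner_smul_left, inner_smul_right, mul_left_comm,
      ← mul_assoc, mul_comm (d : ℂ)] at h'
  have hdc : d = c := by
    ext
    rw [← Complex.inv_eq_conj hc] at hphase
    exact (inv_mul_eq_one₀ c.ne_zero).mp hphase |>.symm
  exact ⟨c, rfl, hdc ▸ rfl⟩

end InnerProductSpace

theorem superposition_well_defined_general {H : Type*} [NormedAddCommGroup H]
    [InnerProductSpace ℂ H]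
    (y z : Submodule ℂ H) (v w : H)
    (hv : ‖v‖ = 1) (hw : ‖w‖ = 1)
    (hy : y = Submodule.span ℂ {v}) (hz : z = Submodule.span ℂ {w})
    (him : (⟪v, w⟫).im = 0) (hre : 0 < (⟪v, w⟫).re)
    (r : ℝ) :
    ((Real.sqrt r : ℂ) • v + (Real.sqrt (1 - r) : ℂ) • w ≠ 0) ∧
    (∀ v' w' : H, ‖v'‖ = 1 → ‖w'‖ = 1 →
      y = Submodule.span ℂ {v'} → z = Submodule.span ℂ {w'} →
      (⟪v', w'⟫).im = 0 → 0 < (⟪v', w'⟫).re →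
      Submodule.span ℂ {(Real.sqrt r : ℂ) • v + (Real.sqrt (1 - r) : ℂ) • w} =
        Submodule.span ℂ {(Real.sqrt r : ℂ) • v' + (Real.sqrt (1 - r) : ℂ) • w'}) ∧
    (Submodule.span ℂ
        {(Real.sqrt 1 : ℂ) • v + (Real.sqrt (1 - 1) : ℂ) • w} = y) ∧
    (Submodule.span ℂ {(Real.sqrt r : ℂ) • v + (Real.sqrt (1 - r) : ℂ) • w} =
      Submodule.span ℂ
        {(Real.sqrt (1 - r) : ℂ) • w + (Real.sqrt (1 - (1 - r)) : ℂ) • v}) := by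
  refine ⟨smul_add_smul_ne_zero_of_re_inner_pos hre (Real.sqrt_nonneg _) (Real.sqrt_nonneg _)
    (Real.sqrt_add_sqrt_one_sub_pos r), ?_, by simp [hy], by rw [sub_sub_cancel, add_comm]⟩
  intro v' w' hv' hw' hy' hz' him' hre'
  obtain ⟨c, rfl, rfl⟩ := exists_units_smul_eq_of_inner_pos (hv'.trans hv.symm)
    (hw'.trans hw.symm) (hy.symm.trans hy') (hz.symm.trans hz')
    (Complex.pos_iff.mpr ⟨hre, him.symm⟩) (Complex.pos_iff.mpr ⟨hre', him'.symm⟩)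
  rw [smul_comm _ c v, smul_comm _ c w, ← smul_add, Submodule.span_singleton_group_smul_eq]

theorem superposition_well_defined {H : Type*} [NormedAddCommGroup H]
    [InnerProductSpace ℂ H]
    (y z : Submodule ℂ H) (v w : H)
    (hv : ‖v‖ = 1) (hw : ‖w‖ = 1)
    (hy : y = Submodule.span ℂ {v}) (hz : z = Submodule.span ℂ {w})
    (him : (⟪v, w⟫).im = 0) (hre : 0 < (⟪v, w⟫).re)
    (r : ℝ) (hr0 : 0 ≤ r) (hr1 : r ≤ 1) :
    ((Real.sqrt r : ℂ) • v + (Real.sqrt (1 - r) : ℂ) • w ≠ 0) ∧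
    (∀ v' w' : H, ‖v'‖ = 1 → ‖w'‖ = 1 →
      y = Submodule.span ℂ {v'} → z = Submodule.span ℂ {w'} →
      (⟪v', w'⟫).im = 0 → 0 < (⟪v', w'⟫).re →
      Submodule.span ℂ {(Real.sqrt r : ℂ) • v + (Real.sqrt (1 - r) : ℂ) • w} =
        Submodule.span ℂ {(Real.sqrt r : ℂ) • v' + (Real.sqrt (1 - r) : ℂ) • w'}) ∧
    (Submodule.span ℂ
        {(Real.sqrt 1 : ℂ) • v + (Real.sqrt (1 - 1) : ℂ) • w} = y) ∧
    (Submodule.span ℂ {(Real.sqrt r : ℂ) • v + (Real.sqrt (1 - r) : ℂ) • w} =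
      Submodule.span ℂ
        {(Real.sqrt (1 - r) : ℂ) • w + (Real.sqrt (1 - (1 - r)) : ℂ) • v}) :=
  superposition_well_defined_general y z v w hv hw hy hz him hre r
end

section
/- For rays x, y, z in a complex Hilbert space, pairwise non-orthogonal, and r ∈ [0,1], with ω := 1 + 2√(r(1−r)p(y,z)): p(ry + (1−r)z, x) = [r·p(y,x) + (1−r)·p(z,x) + 2cos(θ(x,y,z))·√(r(1−r)p(y,x)p(z,x))] / ω. -/
local notation "⟪" x ", " y "⟫" => @inner ℂ _ _ x y

/-! Expanding `s = √r v + √(1-r) w` gives `‖s‖² = 1 + 2√(r(1-r)) Re⟪v, w⟫` and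
`|⟪s, u⟫|² = r|⟪v, u⟫|² + (1-r)|⟪w, u⟫|² + 2√(r(1-r)) Re(⟪u, v⟫⟪w, u⟫)`. Since `⟪v, w⟫ > 0`, its
argument vanishes, so `θ = arg ⟪u, v⟫ + arg ⟪w, u⟫` and `Re (p q) = |p||q| cos (arg p + arg q)`
turns the last real part into `|⟪v, u⟫||⟪w, u⟫| cos θ`, while `Re⟪v, w⟫ = |⟪v, w⟫|`. -/

open Complex in
theorem Complex.re_mul_eq_norm_mul_norm_mul_cos_arg_add (p q : ℂ) :
    (p * q).re = ‖p‖ * ‖q‖ * Real.cos (arg p + arg q) := by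
  rw [Real.cos_add, mul_re, ← norm_mul_cos_arg p, ← norm_mul_cos_arg q, ← norm_mul_sin_arg p,
    ← norm_mul_sin_arg q]
  ring

section Superposition

variable {H : Type*} [NormedAddCommGroup H] [InnerProductSpace ℂ H]

theorem norm_ofReal_smul_add_ofReal_smul_sq (a b : ℝ) (v w : H) :
    ‖(a : ℂ) • v + (b : ℂ) • w‖ ^ 2 =
      a ^ 2 * ‖v‖ ^ 2 + b ^ 2 * ‖w‖ ^ 2 + 2 * a * b * (⟪v, w⟫).re := by
  rw [@norm_add_sq ℂ, inner_smul_left, inner_smul_right, norm_smul, norm_smul, Complex.conj_ofReal,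
    Complex.norm_real, Complex.norm_real, RCLike.re_to_complex, ← mul_assoc, ← Complex.ofReal_mul,
    Complex.re_ofReal_mul]
  simp only [Real.norm_eq_abs, mul_pow, sq_abs]
  ring

theorem norm_inner_ofReal_smul_add_ofReal_smul_left_sq (a b : ℝ) (u v w : H) :
    ‖⟪(a : ℂ) • v + (b : ℂ) • w, u⟫‖ ^ 2 =
      a ^ 2 * ‖⟪v, u⟫‖ ^ 2 + b ^ 2 * ‖⟪w, u⟫‖ ^ 2 + 2 * a * b * (⟪u, v⟫ * ⟪w, u⟫).re := by
  rw [inner_add_left, inner_smul_left, inner_smul_left, Complex.conj_ofReal, Complex.conj_ofReal,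
    ← smul_eq_mul, ← smul_eq_mul (b : ℂ), norm_ofReal_smul_add_ofReal_smul_sq, RCLike.inner_apply,
    inner_conj_symm, mul_comm ⟪w, u⟫]

end Superposition

theorem p_of_superposition_general {H : Type*} [NormedAddCommGroup H]
    [InnerProductSpace ℂ H]
    (u v w : H)
    (hv : ‖v‖ = 1) (hw : ‖w‖ = 1)
    (him : (⟪v, w⟫).im = 0) (hre : 0 < (⟪v, w⟫).re)
    (r : ℝ) (hr0 : 0 ≤ r) (hr1 : r ≤ 1)
    (s : H) (hs : s = (Real.sqrt r : ℂ) • v + (Real.sqrt (1 - r) : ℂ) • w)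
    (θ : ℝ)
    (hθ : θ = Complex.arg ⟪u, v⟫ + Complex.arg ⟪v, w⟫ + Complex.arg ⟪w, u⟫) :
    ‖⟪s, u⟫‖ ^ 2 / ‖s‖ ^ 2 =
      (r * ‖⟪v, u⟫‖ ^ 2 + (1 - r) * ‖⟪w, u⟫‖ ^ 2 +
        2 * Real.cos θ *
          Real.sqrt (r * (1 - r) * (‖⟪v, u⟫‖ ^ 2) * (‖⟪w, u⟫‖ ^ 2))) /
      (1 + 2 * Real.sqrt (r * (1 - r) * (‖⟪v, w⟫‖ ^ 2))) := by
  have h1r : 0 ≤ 1 - r := by linarith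
  have harg : Complex.arg ⟪v, w⟫ = 0 := Complex.arg_eq_zero_iff.mpr ⟨hre.le, him⟩
  have hnorm : ‖⟪v, w⟫‖ = (⟪v, w⟫).re := by
    rw [← Complex.norm_mul_cos_arg ⟪v, w⟫, harg, Real.cos_zero, mul_one]
  rw [hs, hθ, harg, add_zero, norm_inner_ofReal_smul_add_ofReal_smul_left_sq,
    norm_ofReal_smul_add_ofReal_smul_sq, Complex.re_mul_eq_norm_mul_norm_mul_cos_arg_add,
    norm_inner_symm u v, hv, hw, hnorm, Real.sq_sqrt hr0, Real.sq_sqrt h1r,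
    Real.sqrt_mul' _ (sq_nonneg _), Real.sqrt_mul' _ (sq_nonneg _), Real.sqrt_mul' _ (sq_nonneg _),
    Real.sqrt_mul hr0, Real.sqrt_sq (norm_nonneg _), Real.sqrt_sq (norm_nonneg _),
    Real.sqrt_sq hre.le]
  ring

theorem p_of_superposition {H : Type*} [NormedAddCommGroup H]
    [InnerProductSpace ℂ H]
    (x y z : Submodule ℂ H) (u v w : H)
    (hu : ‖u‖ = 1) (hv : ‖v‖ = 1) (hw : ‖w‖ = 1)
    (hx : x = Submodule.span ℂ {u}) (hy : y = Submodule.span ℂ {v})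
    (hz : z = Submodule.span ℂ {w})
    (hxy : ⟪u, v⟫ ≠ 0) (hyz : ⟪v, w⟫ ≠ 0) (hzx : ⟪w, u⟫ ≠ 0)
    (him : (⟪v, w⟫).im = 0) (hre : 0 < (⟪v, w⟫).re)
    (r : ℝ) (hr0 : 0 ≤ r) (hr1 : r ≤ 1)
    (s : H) (hs : s = (Real.sqrt r : ℂ) • v + (Real.sqrt (1 - r) : ℂ) • w)
    (θ : ℝ)
    (hθ : θ = Complex.arg ⟪u, v⟫ + Complex.arg ⟪v, w⟫ + Complex.arg ⟪w, u⟫) :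
    ‖⟪s, u⟫‖ ^ 2 / ‖s‖ ^ 2 =
      (r * ‖⟪v, u⟫‖ ^ 2 + (1 - r) * ‖⟪w, u⟫‖ ^ 2 +
        2 * Real.cos θ *
          Real.sqrt (r * (1 - r) * (‖⟪v, u⟫‖ ^ 2) * (‖⟪w, u⟫‖ ^ 2))) /
      (1 + 2 * Real.sqrt (r * (1 - r) * (‖⟪v, w⟫‖ ^ 2))) :=
  p_of_superposition_general u v w hv hw him hre r hr0 hr1 s hs θ hθ
end

section
/- Let y, z be non-orthogonal distinct rays in a complex Hilbert space, r ∈ [0,1], and x = ry + (1−r)z. Then p(x,y) = 1 − (1−r)(1 − p(y,z)) / (1 + 2√(r(1−r)p(y,z))), and for 0 < r ≤ 1 one has p(ry + (1−r)z, y) > p(y,z). -/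
/-!
Put `c = ⟪v, w⟫ ∈ (0, 1)` (it is `< 1` because distinct rays force `v ≠ w`) and
`s = a • v + b • w` with `a = √r`, `b = √(1 - r)`, so `a² + b² = 1`. Then `⟪s, v⟫ = a + b c` and
`‖s‖² = 1 + 2abc`, whence `1 - p = b² (1 - c²) / (1 + 2abc)` and
`(a + bc)² - c² (1 + 2abc) = (1 - c²) (a² + 2abc) > 0` for `a > 0`.
-/

local notation "⟪" x ", " y "⟫" => @inner ℂ _ _ x y

section InnerProductSpace

variable {𝕜 E : Type*} [RCLike 𝕜] [NormedAddCommGroup E] [InnerProductSpace 𝕜 E]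

open RCLike

theorem re_inner_lt_one_of_ne {v w : E} (hv : ‖v‖ = 1) (hw : ‖w‖ = 1) (hne : v ≠ w) :
    re (inner 𝕜 v w) < 1 := by
  have hpos : 0 < ‖v - w‖ ^ 2 := by
    have := norm_pos_iff.mpr (sub_ne_zero.mpr hne)
    positivity
  rw [@norm_sub_sq 𝕜, hv, hw] at hpos
  linarith

variable {v w : E} {c : ℝ}

theorem inner_smul_add_smul_left_of_inner_eq_ofReal (hv : ‖v‖ = 1) (hvw : inner 𝕜 v w = c)
    (a b : ℝ) : inner 𝕜 ((a : 𝕜) • v + (b : 𝕜) • w) v = ((a + b * c : ℝ) : 𝕜) := by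
  rw [inner_add_left, inner_smul_left, inner_smul_left, inner_self_eq_norm_sq_to_K, hv,
    ← inner_conj_symm, hvw]
  simp

theorem norm_smul_add_smul_sq_of_inner_eq_ofReal (hv : ‖v‖ = 1) (hw : ‖w‖ = 1)
    (hvw : inner 𝕜 v w = c) (a b : ℝ) :
    ‖(a : 𝕜) • v + (b : 𝕜) • w‖ ^ 2 = a ^ 2 + b ^ 2 + 2 * a * b * c := by
  rw [@norm_add_sq 𝕜, inner_smul_left, inner_smul_right, hvw, norm_smul, norm_smul, hv, hw]
  simp only [conj_ofReal, ← ofReal_mul, ofReal_re, norm_ofReal, mul_one, sq_abs]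
  ring

end InnerProductSpace

section SuperpositionRatio

variable {a b c : ℝ}

theorem sq_add_mul_div_eq_one_sub (hab : a ^ 2 + b ^ 2 = 1) (ha : 0 ≤ a) (hb : 0 ≤ b)
    (hc : 0 ≤ c) :
    (a + b * c) ^ 2 / (1 + 2 * a * b * c) = 1 - b ^ 2 * (1 - c ^ 2) / (1 + 2 * a * b * c) := by
  rw [eq_sub_iff_add_eq, ← add_div, div_eq_one_iff_eq (by positivity)]
  linear_combination hab

theorem sq_lt_sq_add_mul_div (hab : a ^ 2 + b ^ 2 = 1) (ha : 0 < a) (hb : 0 ≤ b)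
    (hc₀ : 0 ≤ c) (hc₁ : c < 1) : c ^ 2 < (a + b * c) ^ 2 / (1 + 2 * a * b * c) := by
  rw [lt_div_iff₀ (by positivity)]
  have key : 0 < (1 - c ^ 2) * (a ^ 2 + 2 * a * b * c) := by
    apply mul_pos <;> [nlinarith; positivity]
  linear_combination key - c ^ 2 * hab

end SuperpositionRatio

theorem p_superposition_component_general {H : Type*} [NormedAddCommGroup H]
    [InnerProductSpace ℂ H]
    (y z : Submodule ℂ H) (hyz_ne : y ≠ z) (v w : H)
    (hv : ‖v‖ = 1) (hw : ‖w‖ = 1)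
    (hy : y = Submodule.span ℂ {v}) (hz : z = Submodule.span ℂ {w})
    (him : (⟪v, w⟫).im = 0) (hre : 0 < (⟪v, w⟫).re)
    (r : ℝ) (hr0 : 0 ≤ r) (hr1 : r ≤ 1)
    (s : H) (hs : s = (Real.sqrt r : ℂ) • v + (Real.sqrt (1 - r) : ℂ) • w) :
    ‖⟪s, v⟫‖ ^ 2 / ‖s‖ ^ 2 =
      1 - (1 - r) * (1 - ‖⟪v, w⟫‖ ^ 2) /
        (1 + 2 * Real.sqrt (r * (1 - r) * (‖⟪v, w⟫‖ ^ 2))) ∧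
    (0 < r → ‖⟪v, w⟫‖ ^ 2 < ‖⟪s, v⟫‖ ^ 2 / ‖s‖ ^ 2) := by
  set c := (⟪v, w⟫).re
  set a := Real.sqrt r
  set b := Real.sqrt (1 - r)
  have hvw : ⟪v, w⟫ = c := Complex.ext rfl (by simp [him])
  have hvw_ne : v ≠ w := by rintro rfl; exact hyz_ne (hy.trans hz.symm)
  have hc₁ : c < 1 := re_inner_lt_one_of_ne (𝕜 := ℂ) hv hw hvw_ne
  have hb2 : b ^ 2 = 1 - r := Real.sq_sqrt (by linarith)
  have hab : a ^ 2 + b ^ 2 = 1 := by rw [Real.sq_sqrt hr0, hb2]; ring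
  -- the lemmas above are stated with the `RCLike` coercion `ℝ → 𝕜`
  rw [← RCLike.ofReal_eq_complex_ofReal] at hs
  have hnorm_vw : ‖⟪v, w⟫‖ = c := by rw [hvw, Complex.norm_real, Real.norm_of_nonneg hre.le]
  have hnorm_sv : ‖⟪s, v⟫‖ = a + b * c := by
    rw [hs, inner_smul_add_smul_left_of_inner_eq_ofReal hv hvw, RCLike.norm_ofReal,
      abs_of_nonneg (by positivity)]
  have hnorm_s : ‖s‖ ^ 2 = 1 + 2 * a * b * c := by
    rw [hs, norm_smul_add_smul_sq_of_inner_eq_ofReal hv hw hvw, hab]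
  have hsqrt : Real.sqrt (r * (1 - r) * c ^ 2) = a * b * c := by
    rw [Real.sqrt_mul (by nlinarith), Real.sqrt_mul hr0, Real.sqrt_sq hre.le]
  rw [hnorm_sv, hnorm_s, hnorm_vw, hsqrt, ← hb2, ← mul_assoc, ← mul_assoc]
  exact ⟨sq_add_mul_div_eq_one_sub hab (Real.sqrt_nonneg _) (Real.sqrt_nonneg _) hre.le,
    fun hr ↦ sq_lt_sq_add_mul_div hab (Real.sqrt_pos.mpr hr) (Real.sqrt_nonneg _) hre.le hc₁⟩

theorem p_superposition_component {H : Type*} [NormedAddCommGroup H]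
    [InnerProductSpace ℂ H]
    (y z : Submodule ℂ H) (hyz_ne : y ≠ z) (v w : H)
    (hv : ‖v‖ = 1) (hw : ‖w‖ = 1)
    (hy : y = Submodule.span ℂ {v}) (hz : z = Submodule.span ℂ {w})
    (hno : ⟪v, w⟫ ≠ 0)
    (him : (⟪v, w⟫).im = 0) (hre : 0 < (⟪v, w⟫).re)
    (r : ℝ) (hr0 : 0 ≤ r) (hr1 : r ≤ 1)
    (s : H) (hs : s = (Real.sqrt r : ℂ) • v + (Real.sqrt (1 - r) : ℂ) • w) :
    ‖⟪s, v⟫‖ ^ 2 / ‖s‖ ^ 2 =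
      1 - (1 - r) * (1 - ‖⟪v, w⟫‖ ^ 2) /
        (1 + 2 * Real.sqrt (r * (1 - r) * (‖⟪v, w⟫‖ ^ 2))) ∧
    (0 < r → ‖⟪v, w⟫‖ ^ 2 < ‖⟪s, v⟫‖ ^ 2 / ‖s‖ ^ 2) :=
  p_superposition_component_general y z hyz_ne v w hv hw hy hz him hre r hr0 hr1 s hs
end

section
/- Let m : H₁ → H₂ be an injective linear map between complex Hilbert spaces and let m̄ be the induced map on rays. Then m̄ preserves superpositions (i.e., for all non-orthogonal rays x, y and r ∈ [0,1], m̄(x) is not orthogonal to m̄(y) and m̄(rx + (1−r)y) = r·m̄(x) + (1−r)·m̄(y)) if and only if there is a real constant c > 0 with ‖m(u)‖ = c‖u‖ for all u ∈ H₁. -/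
local notation "⟪" x ", " y "⟫" => @inner ℂ _ _ x y

/-- The map on rays induced by an injective linear map `m` preserves superpositions:
for any non-orthogonal pair of rays (given by unit vectors `v`, `w` with
`⟪v, w⟫` real and positive) and any `r ∈ [0,1]`, the image rays are
non-orthogonal, and the image of the superposition ray is the superposition
of the image rays (computed from any admissible unit representatives). -/
def PreservesSuperpositions {H₁ H₂ : Type*}
    [NormedAddCommGroup H₁] [InnerProductSpace ℂ H₁]
    [NormedAddCommGroup H₂] [InnerProductSpace ℂ H₂]
    (m : H₁ →ₗ[ℂ] H₂) : Prop :=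
  ∀ v w : H₁, ‖v‖ = 1 → ‖w‖ = 1 →
    (⟪v, w⟫).im = 0 → 0 < (⟪v, w⟫).re →
    ∀ r : ℝ, 0 ≤ r → r ≤ 1 →
      (¬ ∀ a ∈ Submodule.span ℂ {m v}, ∀ b ∈ Submodule.span ℂ {m w}, ⟪a, b⟫ = 0) ∧
      (∀ v' w' : H₂, ‖v'‖ = 1 → ‖w'‖ = 1 →
        Submodule.span ℂ {v'} = Submodule.span ℂ {m v} →
        Submodule.span ℂ {w'} = Submodule.span ℂ {m w} →
        (⟪v', w'⟫).im = 0 → 0 < (⟪v', w'⟫).re →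
        Submodule.span ℂ {m ((Real.sqrt r : ℂ) • v + (Real.sqrt (1 - r) : ℂ) • w)} =
          Submodule.span ℂ {(Real.sqrt r : ℂ) • v' + (Real.sqrt (1 - r) : ℂ) • w'})

/-!
For unit vectors `v`, `w` with `⟪v, w⟫ > 0` that are linearly independent, the image rays have
unit representatives `‖m v‖⁻¹ • m v` and `ζ ‖m w‖⁻¹ • m w` (`ζ` a phase) with positive inner
product, so preservation of the equal-weight superposition puts `m (v + w)` on the ray of
`m (‖m v‖⁻¹ • v + ζ ‖m w‖⁻¹ • w)`; independence and the injectivity of `m` (a ray is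
non-orthogonal to itself, so `m` kills no unit vector) force `‖m v‖ = ‖m w‖`.
Rotating the phase of `w` reduces every non-orthogonal pair to this case (dependent pairs being
trivial), and an orthogonal pair is linked through the unit vector along `v + w`. Hence `‖m ·‖`
is constant on the unit sphere.

Conversely, if `‖m u‖ = c ‖u‖` then `⟪m x, m y⟫ = c² ⟪x, y⟫` by polarization, so unit
representatives of the rays of `m v`, `m w` with positive inner product are `m v`, `m w` divided
by one and the same scalar, which carries the superposition along.
-/

open ComplexConjugate ComplexOrder Submodule

theorem not_forall_inner_span_singleton_eq_zero_iff {𝕜 E : Type*} [RCLike 𝕜]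
    [NormedAddCommGroup E] [InnerProductSpace 𝕜 E] {x y : E} :
    (¬ ∀ a ∈ span 𝕜 {x}, ∀ b ∈ span 𝕜 {y}, inner 𝕜 a b = 0) ↔ inner 𝕜 x y ≠ 0 := by
  rw [← isOrtho_iff_inner_eq, isOrtho_span]
  simp

theorem inner_map_map_of_norm_map_eq_mul_norm {𝕜 E F : Type*} [RCLike 𝕜]
    [NormedAddCommGroup E] [InnerProductSpace 𝕜 E] [NormedAddCommGroup F] [InnerProductSpace 𝕜 F]
    {m : E →ₗ[𝕜] F} {c : ℝ} (h : ∀ u, ‖m u‖ = c * ‖u‖) (x y : E) :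
    inner 𝕜 (m x) (m y) = (c : 𝕜) ^ 2 * inner 𝕜 x y := by
  rw [inner_eq_sum_norm_sq_div_four (m x), inner_eq_sum_norm_sq_div_four x y]
  simp only [← map_add, ← map_sub, ← map_smul, h]
  push_cast
  ring

theorem exists_norm_eq_one_inner_smul_pos {E : Type*} [NormedAddCommGroup E]
    [InnerProductSpace ℂ E] {x y : E} (h : inner ℂ x y ≠ 0) :
    ∃ ζ : ℂ, ‖ζ‖ = 1 ∧ 0 < inner ℂ x (ζ • y) := by
  refine ⟨conj (inner ℂ x y) / ‖inner ℂ x y‖, ?_, ?_⟩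
  · rw [norm_div, Complex.norm_conj, Complex.norm_real, norm_norm, div_self (norm_ne_zero_iff.2 h)]
  · rw [inner_smul_right, div_mul_eq_mul_div, Complex.conj_mul', sq, mul_div_assoc,
      div_self (by simpa using h), mul_one]
    exact_mod_cast norm_pos_iff.2 h

theorem Complex.eq_of_norm_eq_of_conj_mul_pos {α β : ℂ} (hn : ‖α‖ = ‖β‖)
    (h : 0 < conj α * β) : α = β := by
  have hα : conj α ≠ 0 := left_ne_zero_of_mul h.ne'
  refine mul_left_cancel₀ hα ?_
  rw [Complex.eq_coe_norm_of_nonneg h.le, Complex.conj_mul', norm_mul, Complex.norm_conj, hn]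
  push_cast
  ring

theorem exists_pos_norm_map_eq_mul_norm {𝕜 E F : Type*} [RCLike 𝕜]
    [NormedAddCommGroup E] [NormedSpace 𝕜 E] [NormedAddCommGroup F] [NormedSpace 𝕜 F]
    {m : E →ₗ[𝕜] F} (hinj : Function.Injective m)
    (h : ∀ x y : E, ‖x‖ = 1 → ‖y‖ = 1 → ‖m x‖ = ‖m y‖) :
    ∃ c : ℝ, 0 < c ∧ ∀ u, ‖m u‖ = c * ‖u‖ := by
  rcases subsingleton_or_nontrivial E with hE | hE
  · exact ⟨1, one_pos, fun u => by simp [Subsingleton.elim u 0]⟩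
  obtain ⟨u₀, hu₀⟩ := exists_ne (0 : E)
  have hunit : ∀ {u : E}, u ≠ 0 → ‖(‖u‖⁻¹ : 𝕜) • u‖ = 1 := norm_smul_inv_norm
  refine ⟨‖m ((‖u₀‖⁻¹ : 𝕜) • u₀)‖, ?_, fun u => ?_⟩
  · simpa [hu₀] using (map_ne_zero_iff m hinj).2 hu₀
  rcases eq_or_ne u 0 with rfl | hu
  · simp
  rw [h _ _ (hunit hu₀) (hunit hu), map_smul, norm_smul, norm_inv, RCLike.norm_ofReal, abs_norm,
    mul_comm, ← mul_assoc, mul_inv_cancel₀ (norm_ne_zero_iff.2 hu), one_mul]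

namespace PreservesSuperpositions

variable {H₁ H₂ : Type*} [NormedAddCommGroup H₁] [InnerProductSpace ℂ H₁]
  [NormedAddCommGroup H₂] [InnerProductSpace ℂ H₂] {m : H₁ →ₗ[ℂ] H₂}
  {v w : H₁}

theorem inner_map_ne_zero (hp : PreservesSuperpositions m) (hv : ‖v‖ = 1) (hw : ‖w‖ = 1)
    (hvw : 0 < ⟪v, w⟫) : ⟪m v, m w⟫ ≠ 0 := by
  obtain ⟨hre, him⟩ := Complex.pos_iff.1 hvw
  exact not_forall_inner_span_singleton_eq_zero_iff.1
    (hp v w hv hw him.symm hre 0 le_rfl zero_le_one).1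

theorem injective (hp : PreservesSuperpositions m) : Function.Injective m := by
  refine (injective_iff_map_eq_zero m).2 fun u hu => ?_
  by_contra hne
  have hv := norm_smul_inv_norm (𝕜 := ℂ) hne
  refine hp.inner_map_ne_zero hv hv ?_ (by simp [hu])
  rw [inner_self_eq_norm_sq_to_K, hv]
  norm_num

theorem norm_map_pos (hp : PreservesSuperpositions m) (hv : ‖v‖ = 1) : 0 < ‖m v‖ :=
  norm_pos_iff.2 ((map_ne_zero_iff m hp.injective).2 (norm_ne_zero_iff.1 (by simp [hv])))

theorem span_map_add (hp : PreservesSuperpositions m) (hv : ‖v‖ = 1) (hw : ‖w‖ = 1)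
    (hvw : 0 < ⟪v, w⟫) {v' w' : H₂} (hv' : ‖v'‖ = 1) (hw' : ‖w'‖ = 1)
    (hsv : span ℂ {v'} = span ℂ {m v}) (hsw : span ℂ {w'} = span ℂ {m w})
    (hvw' : 0 < ⟪v', w'⟫) : span ℂ {m (v + w)} = span ℂ {v' + w'} := by
  obtain ⟨hre, him⟩ := Complex.pos_iff.1 hvw
  obtain ⟨hre', him'⟩ := Complex.pos_iff.1 hvw'
  have h := (hp v w hv hw him.symm hre (1 / 2) (by norm_num) (by norm_num)).2 v' w' hv' hw'
    hsv hsw him'.symm hre'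
  have hs : ((√(1 / 2) : ℝ) : ℂ) ≠ 0 := by simp
  rwa [show (1 : ℝ) - 1 / 2 = 1 / 2 by norm_num, ← smul_add, ← smul_add, map_smul,
    span_singleton_smul_eq hs.isUnit, span_singleton_smul_eq hs.isUnit] at h

theorem norm_map_eq_of_inner_pos (hp : PreservesSuperpositions m) (hv : ‖v‖ = 1)
    (hw : ‖w‖ = 1) (hvw : 0 < ⟪v, w⟫) (hli : LinearIndependent ℂ ![v, w]) :
    ‖m v‖ = ‖m w‖ := by
  obtain ⟨ζ, hζ, hpos⟩ := exists_norm_eq_one_inner_smul_pos (hp.inner_map_ne_zero hv hw hvw)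
  have ha : 0 < ‖m v‖ := hp.norm_map_pos hv
  have hb : 0 < ‖m w‖ := hp.norm_map_pos hw
  set α : ℂ := ((‖m v‖⁻¹ : ℝ) : ℂ)
  set β : ℂ := ((‖m w‖⁻¹ : ℝ) : ℂ) * ζ
  have hα : ‖α‖ = ‖m v‖⁻¹ := by simp [α]
  have hβ : ‖β‖ = ‖m w‖⁻¹ := by simp [β, hζ]
  have hspan := hp.span_map_add hv hw hvw (v' := α • m v) (w' := β • m w)
    (by rw [norm_smul, hα, inv_mul_cancel₀ ha.ne'])
    (by rw [norm_smul, hβ, inv_mul_cancel₀ hb.ne'])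
    (span_singleton_smul_eq (by simp [α, ha.ne']) _)
    (span_singleton_smul_eq (by simp [← norm_ne_zero_iff, hβ, hb.ne']) _)
    (by
      rw [← smul_smul, inner_smul_left, inner_smul_right, Complex.conj_ofReal]
      exact mul_pos (Complex.zero_lt_real.2 (inv_pos.2 ha))
        (mul_pos (Complex.zero_lt_real.2 (inv_pos.2 hb)) hpos))
  obtain ⟨c, hc⟩ := mem_span_singleton.1 (hspan ▸ mem_span_singleton_self (m (v + w)))
  have hcoef : (c * α) • v + (c * β) • w = (1 : ℂ) • v + (1 : ℂ) • w := by
    refine hp.injective ?_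
    simpa [smul_add, smul_smul] using hc
  obtain ⟨h₁, h₂⟩ := hli.eq_of_pair hcoef
  have hnorm := congrArg norm (h₁.trans h₂.symm)
  rw [norm_mul, norm_mul, hα, hβ] at hnorm
  exact inv_inj.1 (mul_left_cancel₀ (norm_ne_zero_iff.2 (left_ne_zero_of_mul_eq_one h₁)) hnorm)

theorem norm_map_eq_of_inner_ne_zero (hp : PreservesSuperpositions m) (hv : ‖v‖ = 1)
    (hw : ‖w‖ = 1) (hvw : ⟪v, w⟫ ≠ 0) : ‖m v‖ = ‖m w‖ := by
  obtain ⟨ζ, hζ, hpos⟩ := exists_norm_eq_one_inner_smul_pos hvw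
  have hζw : ‖ζ • w‖ = 1 := by rw [norm_smul, hζ, hw, one_mul]
  rw [← one_mul ‖m w‖, ← hζ, ← norm_smul, ← map_smul]
  by_cases hli : LinearIndependent ℂ ![v, ζ • w]
  · exact hp.norm_map_eq_of_inner_pos hv hζw hpos hli
  · obtain ⟨a, ha⟩ : ∃ a : ℂ, a • v = ζ • w := by
      simpa using (LinearIndependent.pair_iff' (ne_zero_of_norm_ne_zero (by simp [hv]))).not.1 hli
    have hna : ‖a‖ = 1 := by simpa [norm_smul, hv, hζw] using congrArg norm ha
    rw [← ha, map_smul, norm_smul, hna, one_mul]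

theorem norm_map_eq_of_norm_eq_one (hp : PreservesSuperpositions m) (hv : ‖v‖ = 1)
    (hw : ‖w‖ = 1) : ‖m v‖ = ‖m w‖ := by
  by_cases hvw : ⟪v, w⟫ = 0
  · have hv₁ : ⟪v, v + w⟫ = 1 := by
      rw [inner_add_right, hvw, add_zero, inner_self_eq_norm_sq_to_K, hv]
      norm_num
    have hw₁ : ⟪v + w, w⟫ = 1 := by
      rw [inner_add_left, hvw, zero_add, inner_self_eq_norm_sq_to_K, hw]
      norm_num
    have hs : v + w ≠ 0 := by
      rintro h
      simp [h] at hv₁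
    have hu := norm_smul_inv_norm (𝕜 := ℂ) hs
    rw [hp.norm_map_eq_of_inner_ne_zero hv hu ?_, hp.norm_map_eq_of_inner_ne_zero hu hw ?_]
    · rw [inner_smul_left, hw₁]
      simpa using hs
    · rw [inner_smul_right, hv₁]
      simpa using hs
  · exact hp.norm_map_eq_of_inner_ne_zero hv hw hvw

theorem of_norm_map_eq_mul_norm {c : ℝ} (hc : 0 < c) (h : ∀ u, ‖m u‖ = c * ‖u‖) :
    PreservesSuperpositions m := by
  intro v w hv hw him hre r _ _
  have hmvw : 0 < ⟪m v, m w⟫ := by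
    rw [inner_map_map_of_norm_map_eq_mul_norm h]
    exact mul_pos (pow_pos (Complex.zero_lt_real.2 hc) 2) (Complex.pos_iff.2 ⟨hre, him.symm⟩)
  refine ⟨not_forall_inner_span_singleton_eq_zero_iff.2 hmvw.ne', ?_⟩
  intro v' w' hv' hw' hsv hsw him' hre'
  obtain ⟨α, hα⟩ := mem_span_singleton.1 (hsv ▸ mem_span_singleton_self (m v))
  obtain ⟨β, hβ⟩ := mem_span_singleton.1 (hsw ▸ mem_span_singleton_self (m w))
  have hnα : ‖α‖ = c := by simpa [norm_smul, hv', hv, h] using congrArg norm hα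
  have hnβ : ‖β‖ = c := by simpa [norm_smul, hw', hw, h] using congrArg norm hβ
  obtain rfl : α = β := by
    refine Complex.eq_of_norm_eq_of_conj_mul_pos (hnα.trans hnβ.symm) ?_
    rw [← hα, ← hβ, inner_smul_left, inner_smul_right, ← mul_assoc] at hmvw
    exact (pos_iff_pos_of_mul_pos hmvw).2 (Complex.pos_iff.2 ⟨hre', him'.symm⟩)
  have hα₀ : α ≠ 0 := norm_ne_zero_iff.1 (hnα ▸ hc.ne')
  rw [map_add, map_smul, map_smul, ← hα, ← hβ, smul_comm _ α, smul_comm _ α, ← smul_add,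
    span_singleton_smul_eq hα₀.isUnit]

end PreservesSuperpositions

theorem preservesSuperpositions_iff_isometry_up_to_scalar_general
    {H₁ H₂ : Type*}
    [NormedAddCommGroup H₁] [InnerProductSpace ℂ H₁]
    [NormedAddCommGroup H₂] [InnerProductSpace ℂ H₂]
    (m : H₁ →ₗ[ℂ] H₂) :
    PreservesSuperpositions m ↔ ∃ c : ℝ, 0 < c ∧ ∀ u : H₁, ‖m u‖ = c * ‖u‖ :=
  ⟨fun hp => exists_pos_norm_map_eq_mul_norm hp.injective fun _ _ =>
      hp.norm_map_eq_of_norm_eq_one,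
    fun ⟨_, hc, h⟩ => .of_norm_map_eq_mul_norm hc h⟩

theorem preservesSuperpositions_iff_isometry_up_to_scalar
    {H₁ H₂ : Type*}
    [NormedAddCommGroup H₁] [InnerProductSpace ℂ H₁]
    [NormedAddCommGroup H₂] [InnerProductSpace ℂ H₂]
    (m : H₁ →ₗ[ℂ] H₂) (hinj : Function.Injective m) :
    PreservesSuperpositions m ↔ ∃ c : ℝ, 0 < c ∧ ∀ u : H₁, ‖m u‖ = c * ‖u‖ :=
  preservesSuperpositions_iff_isometry_up_to_scalar_general m
end
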